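/- Let a be a set of distinct regular cardinals each greater than |a|. Then pcf(a) has a largest element, i.e., there exists θ ∈ pcf(a) such that every member of pcf(a) is ≤ θ. -/

import Mathlib

open Cardinal Ordinal

/-- The set of choice functions on a set `a` of cardinals: functions picking, for each
cardinal `λ ∈ a`, an ordinal below the initial ordinal of `λ`. -/
def ProdChoice (a : Set Cardinal.{0}) : Set (a → Ordinal.{0}) :=
  { f | ∀ i : a, f i < (i : Cardinal).ord }

/-- The cofinality of the reduced product `∏ a / F`: the least cardinality of a family
`S` of choice functions such that every choice function is `≤` some member of `S` on a
set of indices belonging to `F` (this is the cofinality of the linearly ordered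
ultraproduct `∏ a / F`). -/
noncomputable def cofUlt (a : Set Cardinal.{0}) (F : Ultrafilter a) : Cardinal.{1} :=
  sInf { c : Cardinal.{1} | ∃ S : Set (a → Ordinal.{0}), S ⊆ ProdChoice a ∧ #S = c ∧
    ∀ g ∈ ProdChoice a, ∃ f ∈ S, { i | g i ≤ f i } ∈ F }

/-- `pcf a` is the set of possible cofinalities of `∏ a`: cardinals `θ` such that for some
ultrafilter `F` on `a`, the cofinality of the linear order `∏ a / F` is `θ`. -/
def pcf (a : Set Cardinal.{0}) : Set Cardinal.{0} :=
  { θ | ∃ F : Ultrafilter a, cofUlt a F = Cardinal.lift.{1} θ }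

/-- The cofinality of the product `∏ a` under pointwise domination: the least cardinality
of a set `P` of choice functions such that every choice function is dominated pointwise by
a member of `P`. -/
noncomputable def prodCof (a : Set Cardinal.{0}) : Cardinal.{1} :=
  sInf { c : Cardinal.{1} | ∃ S : Set (a → Ordinal.{0}), S ⊆ ProdChoice a ∧ #S = c ∧
    ∀ g ∈ ProdChoice a, ∃ f ∈ S, ∀ i, g i ≤ f i }

/-- `PPset lam kap` is the set of cofinalities of ultraproducts `∏ a / F`, where `a` is a
set of at most `kap` regular cardinals below `lam`, unbounded in `lam`, and `F` is an
ultrafilter on `a` containing no subset of `a` bounded below `lam`. -/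
def PPset (lam kap : Cardinal.{0}) : Set Cardinal.{0} :=
  { θ | ∃ (a : Set Cardinal.{0}) (F : Ultrafilter a),
      (∀ μ ∈ a, μ.IsRegular ∧ μ < lam) ∧
      #a ≤ Cardinal.lift.{1} kap ∧
      (∀ μ < lam, ∃ ν ∈ a, μ < ν) ∧
      (∀ b ∈ F, ¬ ∃ μ < lam, ∀ ν ∈ b, (ν : Cardinal) ≤ μ) ∧
      cofUlt a F = Cardinal.lift.{1} θ }

/-- The pseudopower `pp_κ(λ)`: the supremum of the cofinalities in `PPset lam kap`. -/
noncomputable def ppc (lam kap : Cardinal.{0}) : Cardinal.{0} :=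
  sSup (PPset lam kap)

/-- `pp λ = pp_{cof λ}(λ)`. -/
noncomputable def pp (lam : Cardinal.{0}) : Cardinal.{0} :=
  ppc lam lam.ord.cof

/-- A cardinal is singular if it is infinite and greater than its cofinality. -/
def IsSingular (lam : Cardinal.{0}) : Prop :=
  ℵ₀ ≤ lam ∧ lam.ord.cof < lam

/-!
For a cardinal `λ` let `J_{<λ}` be the ideal of subsets of `a` lying in no ultrafilter `D` with
`cof (∏ a / D) ≥ λ`. The core is Shelah's theorem that `∏ a / J_{<λ}` is `λ`-directed.
With `κ = max |a|⁺ ℵ₀ ≤ min a`, a family `F` with `|F| ≤ κ` is bounded pointwise except at the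
at most one `i ∈ a` equal to `|F|`, and such a singleton lies in `J_{<λ}`. A larger family is
enumerated and replaced by a `J_{<λ}`-increasing sequence. Along a cofinal subset, a sequence of
singular length reduces to a shorter family. A sequence of regular length `μ > κ` with no bound
would yield `κ` distinct elements of `a`.

Directedness shows that an ultrafilter extending the dual filter of `J_{<λ}` has cofinality at
least `λ`. These dual filters, for `λ` ranging over the cofinalities of the ultraproducts, form a
directed family. Hence one ultrafilter extends all of them, and its cofinality is the largest.
-/

open Filter Set

universe u

namespace Pcf

variable {a : Set Cardinal.{0}}

theorem zero_mem_prodChoice (hreg : ∀ lam ∈ a, lam.IsRegular) :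
    (0 : a → Ordinal.{0}) ∈ ProdChoice a :=
  fun i => (hreg i i.2).ord_pos

theorem add_one_mem_prodChoice (hreg : ∀ lam ∈ a, lam.IsRegular) {f : a → Ordinal.{0}}
    (hf : f ∈ ProdChoice a) : f + 1 ∈ ProdChoice a :=
  fun i => (isSuccLimit_ord (hreg i i.2).aleph0_le).add_one_lt (hf i)

theorem exists_bound_of_mk_lt (hreg : ∀ lam ∈ a, lam.IsRegular) {F : Set (a → Ordinal.{0})}
    (hF : F ⊆ ProdChoice a) :
    ∃ h ∈ ProdChoice a, ∀ i : a, #F < lift.{1} (i : Cardinal.{0}) → ∀ f ∈ F, f i ≤ h i := by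
  have key : ∀ i : a, ∃ β < (i : Cardinal.{0}).ord,
      #F < lift.{1} (i : Cardinal.{0}) → ∀ f ∈ F, f i ≤ β := by
    intro i
    by_cases hi : #F < lift.{1} (i : Cardinal.{0})
    · refine ⟨⨆ f : F, (f : a → Ordinal) i, ?_, fun _ f hf => ?_⟩
      · refine Ordinal.lift_iSup_lt_of_lt_cof ?_ fun f => hF f.2 i
        rwa [lift_ord, (hreg i i.2).lift.cof_ord, Cardinal.lift_uzero]
      · exact le_ciSup (f := fun f : F => (f : a → Ordinal) i)
          ⟨_, forall_mem_range.2 fun f => (hF f.2 i).le⟩ ⟨f, hf⟩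
    · exact ⟨0, (hreg i i.2).ord_pos, fun h => absurd h hi⟩
  choose h hh hle using key
  exact ⟨h, hh, hle⟩

theorem cofUlt_le_mk {D : Ultrafilter a} {S : Set (a → Ordinal.{0})} (hS : S ⊆ ProdChoice a)
    (hcov : ∀ g ∈ ProdChoice a, ∃ f ∈ S, {i | g i ≤ f i} ∈ D) : cofUlt a D ≤ #S :=
  csInf_le' ⟨S, hS, rfl, hcov⟩

theorem exists_mk_eq_cofUlt (D : Ultrafilter a) :
    ∃ S ⊆ ProdChoice a, #S = cofUlt a D ∧
      ∀ g ∈ ProdChoice a, ∃ f ∈ S, {i | g i ≤ f i} ∈ D :=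
  csInf_mem (s := {c | ∃ S ⊆ ProdChoice a, #S = c ∧
      ∀ g ∈ ProdChoice a, ∃ f ∈ S, {i | g i ≤ f i} ∈ D})
    ⟨_, ProdChoice a, subset_rfl, rfl, fun g hg => ⟨g, hg, univ_mem' fun i => le_refl (g i)⟩⟩

theorem cofUlt_le_mk_prodChoice (D : Ultrafilter a) : cofUlt a D ≤ #(ProdChoice a) :=
  cofUlt_le_mk subset_rfl fun g hg => ⟨g, hg, univ_mem' fun i => le_refl (g i)⟩

theorem exists_eventually_lt_of_mk_lt {lam : Cardinal.{1}} {D : Ultrafilter a}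
    (hD : lam ≤ cofUlt a D) {P : Set (a → Ordinal.{0})} (hP : P ⊆ ProdChoice a)
    (hPlam : #P < lam) :
    ∃ G ∈ ProdChoice a, ∀ f ∈ P, ∀ᶠ i in D, f i < G i := by
  by_contra! hno
  refine ((cofUlt_le_mk hP fun g hg => ?_).trans_lt hPlam).not_ge hD
  obtain ⟨f, hf, hfD⟩ := hno g hg
  exact ⟨f, hf, hfD⟩

theorem cofUlt_pure_le (hreg : ∀ lam ∈ a, lam.IsRegular) (i₀ : a) :
    cofUlt a (pure i₀) ≤ lift.{1} (i₀ : Cardinal.{0}) := by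
  classical
  let c : Iio (i₀ : Cardinal.{0}).ord → a → Ordinal.{0} := fun γ => Function.update 0 i₀ γ
  refine (cofUlt_le_mk (S := range c) ?_
    fun g hg => ⟨c ⟨g i₀, hg i₀⟩, mem_range_self _, ?_⟩).trans ?_
  · rintro _ ⟨γ, rfl⟩ i
    rcases eq_or_ne i i₀ with rfl | hi
    · simpa [c] using γ.2.out
    · simpa [c, hi] using zero_mem_prodChoice hreg i
  · simp [c]
  · exact mk_range_le.trans (by simp)

/-- The filter dual to Shelah's ideal `J_{<λ}[a]`. -/
def cofFilter (a : Set Cardinal.{0}) (lam : Cardinal.{1}) : Filter a :=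
  ⨆ (D : Ultrafilter a) (_ : lam ≤ cofUlt a D), (D : Filter a)

theorem mem_cofFilter {lam : Cardinal.{1}} {s : Set a} :
    s ∈ cofFilter a lam ↔ ∀ D : Ultrafilter a, lam ≤ cofUlt a D → s ∈ D := by
  simp [cofFilter, Filter.mem_iSup]

theorem le_cofFilter {lam : Cardinal.{1}} {D : Ultrafilter a} (h : lam ≤ cofUlt a D) :
    (D : Filter a) ≤ cofFilter a lam :=
  le_iSup₂ (f := fun (D : Ultrafilter a) (_ : lam ≤ cofUlt a D) => (D : Filter a)) D h

theorem cofFilter_antitone : Antitone (cofFilter a) :=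
  fun _ _ h => iSup₂_mono' fun D hD => ⟨D, h.trans hD, le_rfl⟩

theorem eventually_lift_ne (hreg : ∀ lam ∈ a, lam.IsRegular) {κ lam : Cardinal.{1}}
    (h : κ < lam) : ∀ᶠ i : a in cofFilter a lam, lift.{1} (i : Cardinal.{0}) ≠ κ := by
  refine mem_cofFilter.2 fun D hD => ?_
  by_contra hκ
  have hsub : {i : a | lift.{1} (i : Cardinal.{0}) = κ}.Subsingleton :=
    fun i hi j hj => Subtype.ext (lift_injective (hi.trans hj.symm))
  have hmem : {i : a | lift.{1} (i : Cardinal.{0}) = κ} ∈ D := by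
    simpa [compl_ofPred] using Ultrafilter.compl_mem_iff_notMem.2 hκ
  obtain ⟨i, hi, rfl⟩ := Ultrafilter.eq_pure_of_finite_mem hsub.finite hmem
  exact ((hD.trans (cofUlt_pure_le hreg i)).trans_eq hi).not_gt h

theorem exists_eventuallyLE_of_mk_le (hreg : ∀ lam ∈ a, lam.IsRegular) {lam : Cardinal.{1}}
    {F : Set (a → Ordinal.{0})} (hF : F ⊆ ProdChoice a)
    (hFa : ∀ i : a, #F ≤ lift.{1} (i : Cardinal.{0})) (hFlam : #F < lam) :
    ∃ h ∈ ProdChoice a, ∀ f ∈ F, f ≤ᶠ[cofFilter a lam] h := by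
  obtain ⟨h, hh, hle⟩ := exists_bound_of_mk_lt hreg hF
  exact ⟨h, hh, fun f hf => (eventually_lift_ne hreg hFlam).mono fun i hi =>
    hle i ((hFa i).lt_of_ne' hi) f hf⟩

theorem exists_transfinite_chain {X : Type u} (r : X → X → Prop) {ν : Cardinal.{u}}
    (hν : ℵ₀ ≤ ν) (hbdd : ∀ s : Set X, #s < ν → ∃ x, ∀ y ∈ s, r y x)
    (e : ν.ord.ToType → X) (step : X → X) :
    ∃ g : ν.ord.ToType → X, ∀ β, r (e β) (g β) ∧ ∀ δ < β, r (step (g δ)) (g β) := by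
  have hsmall : ∀ (β : ν.ord.ToType) (p : Iio β → X),
      #(insert (e β) (range p) : Set X) < ν :=
    fun β p => mk_insert_le.trans_lt <| add_lt_of_lt hν
      (mk_range_le.trans_lt (by simpa using mk_Iio_lt β (by simp))) (one_lt_aleph0.trans_le hν)
  choose bound hbound using fun β p => hbdd _ (hsmall β p)
  let g : ν.ord.ToType → X :=
    wellFounded_lt.fix fun β rec => bound β fun δ => step (rec δ δ.2)
  refine ⟨g, fun β => ?_⟩
  have hg : g β = bound β fun δ => step (g δ) := wellFounded_lt.fix_eq _ β
  rw [hg]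
  exact ⟨hbound _ _ _ (mem_insert _ _),
    fun δ hδ => hbound _ _ _ (mem_insert_of_mem _ ⟨⟨δ, hδ⟩, rfl⟩)⟩

theorem exists_forall_eventuallyLE_of_not_isRegular {L : Filter a} {μ : Cardinal.{1}}
    (hμ₀ : ℵ₀ ≤ μ) (hμ : ¬ μ.IsRegular)
    (hsmall : ∀ G ⊆ ProdChoice a, #G < μ → ∃ h ∈ ProdChoice a, ∀ f ∈ G, f ≤ᶠ[L] h)
    (g : μ.ord.ToType → a → Ordinal.{0}) (hg : ∀ β, g β ∈ ProdChoice a)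
    (hmono : ∀ δ β, δ ≤ β → g δ ≤ᶠ[L] g β) :
    ∃ h ∈ ProdChoice a, ∀ β, g β ≤ᶠ[L] h := by
  obtain ⟨U, hU, hUcard⟩ := Order.exists_cof_eq μ.ord.ToType
  have hUμ : #U < μ := by
    rw [hUcard, cof_toType]
    exact (Cardinal.IsSingular.of_not_isRegular hμ₀ hμ).cof_ord_lt
  obtain ⟨h, hh, hbound⟩ :=
    hsmall _ (image_subset_iff.2 fun β _ => hg β) (mk_image_le.trans_lt hUμ)
  refine ⟨h, hh, fun β => ?_⟩
  obtain ⟨u, hu, hβu⟩ := hU β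
  exact (hmono _ _ hβu).trans (hbound _ (mem_image_of_mem g hu))

/-- If no bound existed, every candidate `h` would be exceeded by some `g (bad h)` on a set of an
ultrafilter `D h` of cofinality `≥ λ`, in which some `G h` dominates the whole sequence. Iterating
`h ↦ G h` along `κ` and bounding all the `bad` indices by `αs < μ`, the points where
`H ξ < g (bad (H ξ)) ≤ g αs < G (H ξ)` are pairwise distinct for distinct `ξ`. -/
theorem exists_forall_eventuallyLE_of_isRegular (hreg : ∀ lam ∈ a, lam.IsRegular)
    {κ μ lam : Cardinal.{1}} (hκ₀ : ℵ₀ ≤ κ) (haκ : #a < κ)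
    (hκa : ∀ i : a, κ ≤ lift.{1} (i : Cardinal.{0}))
    (hμ : μ.IsRegular) (hκμ : κ < μ) (hμlam : μ < lam)
    (g : μ.ord.ToType → a → Ordinal.{0}) (hg : ∀ β, g β ∈ ProdChoice a)
    (hmono : ∀ δ β, δ ≤ β → g δ ≤ᶠ[cofFilter a lam] g β) :
    ∃ h ∈ ProdChoice a, ∀ β, g β ≤ᶠ[cofFilter a lam] h := by
  by_contra hcon
  simp only [not_exists, not_and, not_forall] at hcon
  have hescape : ∀ h : ProdChoice a, ∃ β, ∃ D : Ultrafilter a, ∃ G : ProdChoice a,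
      (D : Filter a) ≤ cofFilter a lam ∧ (∀ᶠ i in D, (h : a → Ordinal.{0}) i < g β i) ∧
        ∀ β', ∀ᶠ i in D, g β' i < (G : a → Ordinal.{0}) i := by
    intro h
    obtain ⟨β, hβ⟩ := hcon h h.2
    obtain ⟨D, hD, hDβ⟩ : ∃ D : Ultrafilter a,
        lam ≤ cofUlt a D ∧ ¬ ∀ᶠ i in D, g β i ≤ (h : a → Ordinal.{0}) i := by
      simpa [EventuallyLE, Filter.Eventually, mem_cofFilter] using hβ
    obtain ⟨G, hG, hGlt⟩ := exists_eventually_lt_of_mk_lt hD (range_subset_iff.2 hg)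
      (mk_range_le.trans_lt (by simpa using hμlam))
    exact ⟨β, D, ⟨G, hG⟩, le_cofFilter hD, by simpa using Ultrafilter.eventually_not.2 hDβ,
      fun β' => hGlt _ (mem_range_self β')⟩
  choose bad D G hDlam hbad hG using hescape
  have hbdd : ∀ s : Set (ProdChoice a), #s < κ → ∃ x : ProdChoice a,
      ∀ y ∈ s, ∀ i, (y : a → Ordinal.{0}) i ≤ (x : a → Ordinal.{0}) i := by
    intro s hs
    obtain ⟨h, hh, hle⟩ := exists_bound_of_mk_lt hreg (Subtype.coe_image_subset _ s)
    exact ⟨⟨h, hh⟩, fun y hy i =>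
      hle i (mk_image_le.trans_lt (hs.trans_le (hκa i))) _ (mem_image_of_mem _ hy)⟩
  obtain ⟨H, hH⟩ :=
    exists_transfinite_chain _ hκ₀ hbdd (fun _ => ⟨0, zero_mem_prodChoice hreg⟩) G
  obtain ⟨αs, hαs⟩ : ∃ αs, ∀ ξ, bad (H ξ) ≤ αs := by
    have : ¬ IsCofinal (range fun ξ => bad (H ξ)) := fun hcof =>
      ((Order.cof_le hcof).trans mk_range_le).not_gt
        (by rwa [mk_ord_toType, cof_toType, hμ.cof_ord])
    obtain ⟨x, hx⟩ := not_isCofinal_iff.1 this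
    exact ⟨x, fun ξ => (hx _ (mem_range_self ξ)).le⟩
  have hpick : ∀ ξ, ∃ i, (H ξ : a → Ordinal.{0}) i < g (bad (H ξ)) i ∧
      g (bad (H ξ)) i ≤ g αs i ∧ g αs i < (G (H ξ) : a → Ordinal.{0}) i :=
    fun ξ => ((hbad _).and (((hmono _ _ (hαs ξ)).filter_mono (hDlam _)).and (hG _ αs))).exists
  choose pick hpick using hpick
  have hinj : Function.Injective pick := by
    intro ζ ξ hζξ
    by_contra hne
    wlog hlt : ζ < ξ generalizing ζ ξ
    · exact this hζξ.symm (Ne.symm hne) ((lt_or_gt_of_ne hne).resolve_left hlt)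
    obtain ⟨-, -, h₁⟩ := hpick ζ
    obtain ⟨h₂, h₃, -⟩ := hpick ξ
    rw [hζξ] at h₁
    exact ((h₁.trans_le ((hH ξ).2 ζ hlt _)).trans (h₂.trans_le h₃)).false
  exact haκ.not_ge (by simpa using mk_le_of_injective hinj)

theorem exists_eventuallyLE_of_lt_mk (hreg : ∀ lam ∈ a, lam.IsRegular)
    {κ lam : Cardinal.{1}} (hκ₀ : ℵ₀ ≤ κ) (haκ : #a < κ)
    (hκa : ∀ i : a, κ ≤ lift.{1} (i : Cardinal.{0}))
    {F : Set (a → Ordinal.{0})} (hF : F ⊆ ProdChoice a) (hκF : κ < #F) (hFlam : #F < lam)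
    (hsmall : ∀ G ⊆ ProdChoice a, #G < #F →
      ∃ h ∈ ProdChoice a, ∀ f ∈ G, f ≤ᶠ[cofFilter a lam] h) :
    ∃ h ∈ ProdChoice a, ∀ f ∈ F, f ≤ᶠ[cofFilter a lam] h := by
  have hF₀ : ℵ₀ ≤ #F := hκ₀.trans hκF.le
  obtain ⟨e⟩ : Nonempty ((#F).ord.ToType ≃ F) := Cardinal.eq.1 (mk_ord_toType _)
  have hbdd : ∀ s : Set (ProdChoice a), #s < #F →
      ∃ x : ProdChoice a, ∀ y ∈ s, (y : a → Ordinal.{0}) ≤ᶠ[cofFilter a lam] x := by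
    intro s hs
    obtain ⟨h, hh, hle⟩ := hsmall _ (Subtype.coe_image_subset _ s) (mk_image_le.trans_lt hs)
    exact ⟨⟨h, hh⟩, fun y hy => hle _ (mem_image_of_mem _ hy)⟩
  obtain ⟨g, hg⟩ := exists_transfinite_chain _ hF₀ hbdd (fun β => ⟨e β, hF (e β).2⟩) id
  have hmono : ∀ δ β, δ ≤ β → (g δ : a → Ordinal.{0}) ≤ᶠ[cofFilter a lam] g β := by
    intro δ β hδβ
    rcases hδβ.eq_or_lt with rfl | hlt
    · exact EventuallyLE.refl _ _
    · exact (hg β).2 δ hlt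
  obtain ⟨h, hh, hbound⟩ :
      ∃ h ∈ ProdChoice a, ∀ β, (g β : a → Ordinal.{0}) ≤ᶠ[cofFilter a lam] h := by
    by_cases hFreg : (#F).IsRegular
    · exact exists_forall_eventuallyLE_of_isRegular hreg hκ₀ haκ hκa hFreg hκF hFlam _
        (fun β => (g β).2) hmono
    · exact exists_forall_eventuallyLE_of_not_isRegular hF₀ hFreg hsmall _
        (fun β => (g β).2) hmono
  refine ⟨h, hh, fun f hf => ?_⟩
  simpa using (hg (e.symm ⟨f, hf⟩)).1.trans (hbound _)

theorem exists_eventuallyLE_cofFilter (hreg : ∀ lam ∈ a, lam.IsRegular)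
    (hgt : ∀ lam ∈ a, #a < lift.{1} lam) {lam : Cardinal.{1}} {F : Set (a → Ordinal.{0})}
    (hF : F ⊆ ProdChoice a) (hFlam : #F < lam) :
    ∃ h ∈ ProdChoice a, ∀ f ∈ F, f ≤ᶠ[cofFilter a lam] h := by
  set κ := max (Order.succ #a) ℵ₀
  have hκa : ∀ i : a, κ ≤ lift.{1} (i : Cardinal.{0}) := fun i =>
    max_le (Order.succ_le_of_lt (hgt i i.2)) (by simpa using (hreg i i.2).aleph0_le)
  suffices ∀ μ, ∀ F ⊆ ProdChoice a, #F = μ → #F < lam →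
      ∃ h ∈ ProdChoice a, ∀ f ∈ F, f ≤ᶠ[cofFilter a lam] h from this _ F hF rfl hFlam
  intro μ
  induction μ using WellFoundedLT.induction with
  | ind μ IH =>
    rintro F hF rfl hFlam
    rcases le_or_gt #F κ with hsmall | hlarge
    · exact exists_eventuallyLE_of_mk_le hreg hF (fun i => hsmall.trans (hκa i)) hFlam
    · exact exists_eventuallyLE_of_lt_mk hreg le_sup_right
        ((Order.lt_succ _).trans_le le_sup_left) hκa hF hlarge hFlam
        fun G hG hGF => IH _ hGF G hG rfl (hGF.trans hFlam)

theorem le_cofUlt_of_le_cofFilter (hreg : ∀ lam ∈ a, lam.IsRegular)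
    (hgt : ∀ lam ∈ a, #a < lift.{1} lam) {lam : Cardinal.{1}} {D : Ultrafilter a}
    (hD : (D : Filter a) ≤ cofFilter a lam) : lam ≤ cofUlt a D := by
  by_contra! hlt
  obtain ⟨S, hS, hScard, hcov⟩ := exists_mk_eq_cofUlt D
  obtain ⟨h, hh, hbound⟩ := exists_eventuallyLE_cofFilter hreg hgt hS (hScard ▸ hlt)
  obtain ⟨f, hf, hhf⟩ := hcov _ (add_one_mem_prodChoice hreg hh)
  obtain ⟨i, hfh, hhf⟩ := (((hbound f hf).filter_mono hD).and hhf).exists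
  exact (Order.lt_add_one_iff.2 le_rfl).not_ge (hhf.trans hfh)

theorem exists_forall_cofUlt_le (hreg : ∀ lam ∈ a, lam.IsRegular)
    (hgt : ∀ lam ∈ a, #a < lift.{1} lam) (hne : a.Nonempty) :
    ∃ D : Ultrafilter a, ∀ D', cofUlt a D' ≤ cofUlt a D := by
  have : Nonempty a := hne.to_subtype
  have hdir : Directed (· ≥ ·) fun D' : Ultrafilter a => cofFilter a (cofUlt a D') := by
    intro D₁ D₂
    rcases le_total (cofUlt a D₁) (cofUlt a D₂) with h | h
    · exact ⟨D₂, cofFilter_antitone h, le_rfl⟩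
    · exact ⟨D₁, le_rfl, cofFilter_antitone h⟩
  have := iInf_neBot_of_directed hdir fun D' => (Ultrafilter.neBot D').mono (le_cofFilter le_rfl)
  obtain ⟨D, hD⟩ := Ultrafilter.exists_le (⨅ D' : Ultrafilter a, cofFilter a (cofUlt a D'))
  exact ⟨D, fun D' => le_cofUlt_of_le_cofFilter hreg hgt (hD.trans (iInf_le _ D'))⟩

theorem small_prodChoice (hgt : ∀ lam ∈ a, #a < lift.{1} lam) (hne : a.Nonempty) :
    Small.{0} (ProdChoice a) := by
  obtain ⟨i, hi⟩ := hne
  have : Small.{0} a :=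
    small_iff_lift_mk_lt_univ.2 (by simpa using (hgt i hi).trans (lift_lt_univ' _))
  exact small_of_injective (f := fun f : ProdChoice a => fun j : a =>
      (⟨f.1 j, f.2 j⟩ : Iio (j : Cardinal.{0}).ord))
    fun f g hfg => Subtype.ext (funext fun j => congrArg Subtype.val (congrFun hfg j))

theorem cofUlt_mem_range_lift (hgt : ∀ lam ∈ a, #a < lift.{1} lam) (hne : a.Nonempty)
    (D : Ultrafilter a) : cofUlt a D ∈ range Cardinal.lift.{1, 0} := by
  have := small_prodChoice hgt hne
  exact mem_range_lift_of_le ((cofUlt_le_mk_prodChoice D).trans (lift_mk_shrink'' _).ge)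

end Pcf

/-- For a nonempty set `a` of regular cardinals each greater than `|a|`, `pcf a` has a
largest element. -/
theorem stmt5 (a : Set Cardinal.{0}) (hne : a.Nonempty)
    (hreg : ∀ lam ∈ a, Cardinal.IsRegular lam)
    (hgt : ∀ lam ∈ a, #a < Cardinal.lift.{1} lam) :
    ∃ θ, IsGreatest (pcf a) θ := by
  obtain ⟨D, hD⟩ := Pcf.exists_forall_cofUlt_le hreg hgt hne
  obtain ⟨θ, hθ⟩ := Pcf.cofUlt_mem_range_lift hgt hne D
  refine ⟨θ, ⟨D, hθ.symm⟩, ?_⟩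
  rintro θ' ⟨D', hD'⟩
  exact lift_le.1 (hD' ▸ hθ ▸ hD D')
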